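/- arXiv:1709.03899 — 2 statements merged into one kernel-verified Lean document; each statement's English description precedes it below -/
import Mathlib

section
/- For the GGS-group G with constant defining vector and p = 3, ψ(K'') contains G'' × G'' × G'', where K = ⟨ba⁻¹⟩^G. -/
/-- The vertex set of the rooted `d`-regular tree: finite words over `Fin d`. -/
abbrev Vert (d : ℕ) := List (Fin d)

/-- A permutation of the vertices sends children of `v` to children of the image
of `v`. -/
def MapsChildren {d : ℕ} (f : Equiv.Perm (Vert d)) : Prop :=
  ∀ (v : Vert d) (i : Fin d), ∃ j : Fin d, f (v ++ [i]) = f v ++ [j]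

/-- The automorphism group of the rooted `d`-regular tree, realised as the subgroup
of permutations of the vertex set which, together with their inverses, map children
to children (equivalently, preserve the root, the levels and the tree structure). -/
def AutT (d : ℕ) : Subgroup (Equiv.Perm (Vert d)) where
  carrier := {f | MapsChildren f ∧ MapsChildren f.symm}
  one_mem' := ⟨fun v i => ⟨i, rfl⟩, fun v i => ⟨i, rfl⟩⟩
  mul_mem' := by
    rintro f g ⟨hf, hf'⟩ ⟨hg, hg'⟩
    refine ⟨fun v i => ?_, fun v i => ?_⟩
    · obtain ⟨j, hj⟩ := hg v i
      obtain ⟨k, hk⟩ := hf (g v) j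
      exact ⟨k, by simp [Equiv.Perm.mul_apply, hj, hk]⟩
    · obtain ⟨j, hj⟩ := hf' v i
      obtain ⟨k, hk⟩ := hg' (f.symm v) j
      exact ⟨k, show g.symm (f.symm (v ++ [i])) = g.symm (f.symm v) ++ [k] by
        rw [hj, hk]⟩
  inv_mem' := by
    rintro f ⟨hf, hf'⟩
    exact ⟨hf', hf⟩

/-- The full pointwise stabilizer of level `n` in `Aut T`. -/
def lvlStab (d n : ℕ) : Subgroup (AutT d) where
  carrier := {f | ∀ v : Vert d, v.length = n → (f : Equiv.Perm (Vert d)) v = v}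
  one_mem' := fun v _ => rfl
  mul_mem' := by
    intro f g hf hg v hv
    simp [Equiv.Perm.mul_apply, hg v hv, hf v hv]
  inv_mem' := by
    intro f hf v hv
    have h := hf v hv
    have h2 : (f : Equiv.Perm (Vert d))⁻¹ v = v := by
      rw [Equiv.Perm.inv_eq_iff_eq]; exact h.symm
    simpa using h2

/-- The subgroup of automorphisms supported on the subtree rooted at the word `u`. -/
def rigid (d : ℕ) (u : Vert d) : Subgroup (AutT d) where
  carrier := {f | ∀ w : Vert d, ¬ u <+: w → (f : Equiv.Perm (Vert d)) w = w}
  one_mem' := fun w _ => rfl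
  mul_mem' := by
    intro f g hf hg w hw
    simp [Equiv.Perm.mul_apply, hg w hw, hf w hw]
  inv_mem' := by
    intro f hf w hw
    have h := hf w hw
    have h2 : (f : Equiv.Perm (Vert d))⁻¹ w = w := by
      rw [Equiv.Perm.inv_eq_iff_eq]; exact h.symm
    simpa using h2

/-- The rigid stabilizer in `G` of the vertex `u`. -/
def ristV {d : ℕ} (G : Subgroup (AutT d)) (u : Vert d) : Subgroup (AutT d) :=
  G ⊓ rigid d u

/-- The rigid stabilizer in `G` of level `n`: the subgroup generated by (equivalently,
the product of) the rigid vertex stabilizers at level `n`. -/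
def ristL {d : ℕ} (G : Subgroup (AutT d)) (n : ℕ) : Subgroup (AutT d) :=
  ⨆ u ∈ {u : Vert d | u.length = n}, ristV G u

/-- `G` acts transitively on every level of the tree. -/
def LevelTransitive {d : ℕ} (G : Subgroup (AutT d)) : Prop :=
  ∀ u v : Vert d, u.length = v.length → ∃ g ∈ G, (g : Equiv.Perm (Vert d)) u = v

section GGS

variable (p : ℕ) [NeZero p]

/-- The rooted automorphism `a` of the `p`-regular tree: it permutes the first-level
subtrees by the `p`-cycle `x ↦ x + 1`. -/
def gA : List (Fin p) → List (Fin p)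
  | [] => []
  | x :: w => (x + 1) :: w

/-- The inverse of `gA`. -/
def gAI : List (Fin p) → List (Fin p)
  | [] => []
  | x :: w => (x - 1) :: w

/-- The directed automorphism `b = (a, a, …, a, b)` of the GGS-group with constant
defining vector. -/
def gB : List (Fin p) → List (Fin p)
  | [] => []
  | x :: w => if (x : ℕ) = p - 1 then x :: gB w else x :: gA p w

/-- The inverse of `gB`. -/
def gBI : List (Fin p) → List (Fin p)
  | [] => []
  | x :: w => if (x : ℕ) = p - 1 then x :: gBI w else x :: gAI p w

theorem gAI_gA : ∀ l, gAI p (gA p l) = l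
  | [] => rfl
  | x :: w => by simp [gA, gAI]

theorem gA_gAI : ∀ l, gA p (gAI p l) = l
  | [] => rfl
  | x :: w => by simp [gA, gAI]

theorem gBI_gB : ∀ l, gBI p (gB p l) = l
  | [] => rfl
  | x :: w => by
    by_cases h : (x : ℕ) = p - 1
    · simp [gB, gBI, h, gBI_gB w]
    · simp [gB, gBI, h, gAI_gA]

theorem gB_gBI : ∀ l, gB p (gBI p l) = l
  | [] => rfl
  | x :: w => by
    by_cases h : (x : ℕ) = p - 1
    · simp [gB, gBI, h, gB_gBI w]
    · simp [gB, gBI, h, gA_gAI]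

/-- `a` as a permutation of the vertices. -/
def aPerm : Equiv.Perm (Vert p) :=
  ⟨gA p, gAI p, gAI_gA p, gA_gAI p⟩

/-- `b` as a permutation of the vertices. -/
def bPerm : Equiv.Perm (Vert p) :=
  ⟨gB p, gBI p, gBI_gB p, gB_gBI p⟩

theorem gA_append (v : Vert p) (i : Fin p) : ∃ j, gA p (v ++ [i]) = gA p v ++ [j] := by
  cases v with
  | nil => exact ⟨i + 1, rfl⟩
  | cons x w => exact ⟨i, rfl⟩

theorem gAI_append (v : Vert p) (i : Fin p) : ∃ j, gAI p (v ++ [i]) = gAI p v ++ [j] := by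
  cases v with
  | nil => exact ⟨i - 1, rfl⟩
  | cons x w => exact ⟨i, rfl⟩

theorem gB_append : ∀ (v : Vert p) (i : Fin p), ∃ j, gB p (v ++ [i]) = gB p v ++ [j]
  | [], i => by
    by_cases h : (i : ℕ) = p - 1 <;> exact ⟨i, by simp [gB, gA, h]⟩
  | x :: w, i => by
    by_cases h : (x : ℕ) = p - 1
    · obtain ⟨j, hj⟩ := gB_append w i
      exact ⟨j, by simp [gB, h, hj]⟩
    · obtain ⟨j, hj⟩ := gA_append p w i
      exact ⟨j, by simp [gB, h, hj]⟩

theorem gBI_append : ∀ (v : Vert p) (i : Fin p), ∃ j, gBI p (v ++ [i]) = gBI p v ++ [j]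
  | [], i => by
    by_cases h : (i : ℕ) = p - 1 <;> exact ⟨i, by simp [gBI, gAI, h]⟩
  | x :: w, i => by
    by_cases h : (x : ℕ) = p - 1
    · obtain ⟨j, hj⟩ := gBI_append w i
      exact ⟨j, by simp [gBI, h, hj]⟩
    · obtain ⟨j, hj⟩ := gAI_append p w i
      exact ⟨j, by simp [gBI, h, hj]⟩

/-- The generator `a` of the GGS-group, as a tree automorphism. -/
def aut_a : AutT p :=
  ⟨aPerm p, gA_append p, gAI_append p⟩

/-- The generator `b` of the GGS-group (constant defining vector), as a tree
automorphism. -/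
def aut_b : AutT p :=
  ⟨bPerm p, gB_append p, gBI_append p⟩

/-- The GGS-group with constant defining vector: `G = ⟨a, b⟩`. -/
def GGS : Subgroup (AutT p) :=
  Subgroup.closure {aut_a p, aut_b p}

/-- `K = ⟨b a⁻¹⟩^G`, the normal closure of `b a⁻¹` in `G`. -/
def GGSK : Subgroup (AutT p) :=
  Subgroup.closure {x | ∃ g ∈ GGS p, x = g * (aut_b p * (aut_a p)⁻¹) * g⁻¹}

end GGS


/-!
Write `ψ⁻¹(g₀, g₁, g₂)` for the automorphism with first-level sections `gᵢ`, and put `c = b a⁻¹`,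
`u = ⁅a, b⁆ = ψ⁻¹(c, 1, c⁻¹)`. Every `g ∈ G` is the first section of some element of `G`, and
`G` normalizes `K`. Conjugating `u` and `(u^a)⁻¹ = ψ⁻¹(c, c⁻¹, 1)` by such lifts of `g, h ∈ G`
gives two elements of `K` whose supports meet only in the first subtree, so their commutator is
`ψ⁻¹(⁅c^g, c^h⁆, 1, 1)`: `G` is weakly regular branch over `K'`. The commutator `⁅c, c^a⁆ ∈ K'` has
first section `c⁻¹`, so `K'` is subdirect in `K × K × K`. Together, `ψ(K'') ⊇ γ₃(K) × 1 × 1`.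
Finally `A = ⟨u, u^a, u^{a²}⟩ ≤ K` is abelian and `b` conjugates its generators into `K' A`, so
`G' ≤ K' A` and `G'' ≤ ⁅K' A, K' A⁆ ≤ γ₃(K)`; conjugation by `a` permutes the coordinates.
-/

open scoped commutatorElement

namespace Subgroup

variable {Γ : Type*} [Group Γ]

theorem le_normalizer_commutator {L H M : Subgroup Γ} (hH : L ≤ normalizer H)
    (hM : L ≤ normalizer M) : L ≤ normalizer (⁅H, M⁆ : Subgroup Γ) := by
  intro g hg
  rw [mem_normalizer_iff_map_conj_eq, map_commutator,
    mem_normalizer_iff_map_conj_eq.1 (hH hg), mem_normalizer_iff_map_conj_eq.1 (hM hg)]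

theorem mem_normalizer_of_conj_mem {H : Subgroup Γ} {g : Γ} (hg : IsOfFinOrder g)
    (h : ∀ x ∈ H, g * x * g⁻¹ ∈ H) : g ∈ normalizer H := by
  have hpow : ∀ n : ℕ, ∀ x ∈ H, g ^ n * x * (g ^ n)⁻¹ ∈ H := by
    intro n
    induction n with
    | zero => simp
    | succ n ih =>
      intro x hx
      simpa [pow_succ', mul_assoc] using h _ (ih x hx)
  obtain ⟨n, hn, hgn⟩ := hg.exists_pow_eq_one
  have hinv : g⁻¹ = g ^ (n - 1) := by
    rw [inv_eq_iff_mul_eq_one, ← pow_succ', Nat.sub_add_cancel hn, hgn]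
  refine fun x => ⟨h x, fun hx => ?_⟩
  have hx' := hpow (n - 1) _ hx
  rw [← hinv, inv_inv] at hx'
  simpa [mul_assoc] using hx'

theorem commutatorElement_mem_of_mem_closure {S : Set Γ} {N : Subgroup Γ}
    (hS : closure S ≤ normalizer N) {y : Γ} (hy : ∀ x ∈ S, ⁅x, y⁆ ∈ N) {x : Γ}
    (hx : x ∈ closure S) : ⁅x, y⁆ ∈ N := by
  induction hx using closure_induction with
  | mem x hx => exact hy x hx
  | one => simp
  | mul x₁ x₂ hx₁ _ ih₁ ih₂ =>
    rw [commutatorElement_mul_left_eq_conj_mul]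
    exact mul_mem ((hS hx₁ _).1 ih₂) ih₁
  | inv x hx ih =>
    rw [commutatorElement_inv_left, ← commutatorElement_inv]
    simpa using (hS (inv_mem hx) _).1 (inv_mem ih)

theorem commutator_closure_le {S : Set Γ} {N : Subgroup Γ} (hS : closure S ≤ normalizer N)
    (h : ∀ x ∈ S, ∀ y ∈ S, ⁅x, y⁆ ∈ N) : ⁅closure S, closure S⁆ ≤ N := by
  refine commutator_le.2 fun x hx y hy =>
    commutatorElement_mem_of_mem_closure hS (fun s hs => ?_) hx
  rw [← commutatorElement_inv]
  exact inv_mem (commutatorElement_mem_of_mem_closure hS (fun t ht => h t ht s hs) hy)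

end Subgroup

namespace AutT

open Subgroup

variable {d : ℕ}

theorem _root_.MapsChildren.symm_apply_nil {f : Equiv.Perm (Vert d)} (hf : MapsChildren f) :
    f.symm [] = [] := by
  rcases List.eq_nil_or_concat (f.symm []) with h | ⟨v, i, h⟩
  · exact h
  · obtain ⟨j, hj⟩ := hf v i
    have := f.apply_symm_apply []
    rw [h, List.concat_eq_append, hj] at this
    simp at this

theorem apply_nil (f : AutT d) : (f : Equiv.Perm (Vert d)) [] = [] :=
  f.2.2.symm_apply_nil

theorem symm_apply_nil (f : AutT d) : (f : Equiv.Perm (Vert d)).symm [] = [] :=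
  f.2.1.symm_apply_nil

def ofSectionsPerm (g : Fin d → AutT d) : Equiv.Perm (Vert d) where
  toFun
    | [] => []
    | x :: w => x :: (g x : Equiv.Perm (Vert d)) w
  invFun
    | [] => []
    | x :: w => x :: (g x : Equiv.Perm (Vert d)).symm w
  left_inv w := by cases w <;> simp
  right_inv w := by cases w <;> simp

theorem ofSectionsPerm_mem (g : Fin d → AutT d) : ofSectionsPerm g ∈ AutT d := by
  constructor
  · rintro (_ | ⟨x, w⟩) i
    · exact ⟨i, by simp [ofSectionsPerm, apply_nil]⟩
    · obtain ⟨j, hj⟩ := (g x).2.1 w i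
      exact ⟨j, by simp [ofSectionsPerm, hj]⟩
  · rintro (_ | ⟨x, w⟩) i
    · exact ⟨i, by simp [ofSectionsPerm, symm_apply_nil]⟩
    · obtain ⟨j, hj⟩ := (g x).2.2 w i
      exact ⟨j, by simp [ofSectionsPerm, hj]⟩

/-- `ψ⁻¹` on the first-level stabilizer. -/
def ofSections : (Fin d → AutT d) →* AutT d where
  toFun g := ⟨ofSectionsPerm g, ofSectionsPerm_mem g⟩
  map_one' := by
    ext (_ | ⟨x, w⟩) <;> rfl
  map_mul' g h := by
    ext (_ | ⟨x, w⟩) <;> rfl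

@[simp]
theorem ofSections_apply_cons (g : Fin d → AutT d) (x : Fin d) (w : Vert d) :
    (ofSections g : Equiv.Perm (Vert d)) (x :: w) = x :: (g x : Equiv.Perm (Vert d)) w :=
  rfl

theorem eq_ofSections {f : AutT d} {g : Fin d → AutT d}
    (h : ∀ x w, (f : Equiv.Perm (Vert d)) (x :: w) = x :: (g x : Equiv.Perm (Vert d)) w) :
    f = ofSections g := by
  ext (_ | ⟨x, w⟩) : 2
  · rw [apply_nil]; rfl
  · rw [h, ofSections_apply_cons]

/-- The `i`-th coordinate of `ψ(H ∩ St(1))`. -/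
def sectionsAt (H : Subgroup (AutT d)) (i : Fin d) : Subgroup (AutT d) :=
  (H.comap ofSections).map (Pi.evalMonoidHom (fun _ => AutT d) i)

/-- `ψ` of the rigid stabilizer in `H` of the first-level vertex `i`, read in coordinate `i`. -/
def rigidSectionsAt (H : Subgroup (AutT d)) (i : Fin d) : Subgroup (AutT d) :=
  H.comap (ofSections.comp (MonoidHom.mulSingle (fun _ : Fin d => AutT d) i))

theorem mem_sectionsAt {H : Subgroup (AutT d)} {i : Fin d} {k : AutT d} :
    k ∈ sectionsAt H i ↔ ∃ g, ofSections g ∈ H ∧ g i = k :=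
  Iff.rfl

theorem mem_rigidSectionsAt {H : Subgroup (AutT d)} {i : Fin d} {k : AutT d} :
    k ∈ rigidSectionsAt H i ↔ ofSections (Pi.mulSingle i k) ∈ H :=
  Iff.rfl

theorem sectionsAt_le_normalizer_sectionsAt {L H : Subgroup (AutT d)} (hL : L ≤ normalizer H)
    (i : Fin d) : sectionsAt L i ≤ normalizer (sectionsAt H i) := by
  rw [le_normalizer_iff]
  intro _ hg' _ hk'
  obtain ⟨g, hg, rfl⟩ := mem_sectionsAt.1 hg'
  obtain ⟨k, hk, rfl⟩ := mem_sectionsAt.1 hk'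
  exact ⟨g * k * g⁻¹, by simpa using le_normalizer_iff.1 hL _ hg _ hk, rfl⟩

theorem sectionsAt_le_normalizer_rigidSectionsAt {L H : Subgroup (AutT d)}
    (hL : L ≤ normalizer H) (i : Fin d) : sectionsAt L i ≤ normalizer (rigidSectionsAt H i) := by
  rw [le_normalizer_iff]
  intro _ hg' k hk
  obtain ⟨g, hg, rfl⟩ := mem_sectionsAt.1 hg'
  have hconj : Pi.mulSingle i (g i * k * (g i)⁻¹) = g * Pi.mulSingle i k * g⁻¹ := by
    ext j : 1
    by_cases hj : j = i
    · subst hj; simp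
    · simp [hj]
  rw [mem_rigidSectionsAt, hconj, map_mul, map_mul, map_inv]
  exact le_normalizer_iff.1 hL _ hg _ hk

theorem commutator_rigidSectionsAt_sectionsAt_le (H M : Subgroup (AutT d)) (i : Fin d) :
    ⁅rigidSectionsAt H i, sectionsAt M i⁆ ≤ rigidSectionsAt ⁅H, M⁆ i := by
  rw [commutator_le]
  intro k hk _ hg'
  obtain ⟨g, hg, rfl⟩ := mem_sectionsAt.1 hg'
  have hcomm : Pi.mulSingle i ⁅k, g i⁆ = ⁅(Pi.mulSingle i k : Fin d → AutT d), g⁆ := by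
    ext j : 1
    by_cases hj : j = i
    · subst hj; simp [commutatorElement_def]
    · simp [hj, commutatorElement_def]
  rw [mem_rigidSectionsAt, hcomm, map_commutatorElement]
  exact commutator_mem_commutator hk hg

theorem ofSections_mem {H : Subgroup (AutT d)} {g : Fin d → AutT d}
    (h : ∀ i, g i ∈ rigidSectionsAt H i) : ofSections g ∈ H :=
  pi_mem_of_mulSingle_mem (H := H.comap ofSections) g (fun i => mem_rigidSectionsAt.1 (h i))

variable {p : ℕ} [NeZero p]

theorem aut_a_mul_ofSections_mul_inv (g : Fin p → AutT p) :
    aut_a p * ofSections g * (aut_a p)⁻¹ = ofSections fun x => g (x - 1) := by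
  ext (_ | ⟨x, w⟩) : 2
  · rfl
  · show gA p (((ofSections g : AutT p) : Equiv.Perm (Vert p)) (gAI p (x :: w))) = _
    simp [gA, gAI]

theorem aut_b_eq_ofSections :
    aut_b p = ofSections fun x => if (x : ℕ) = p - 1 then aut_b p else aut_a p := by
  ext (_ | ⟨x, w⟩) : 2
  · rfl
  · show gB p (x :: w) = _
    by_cases hx : (x : ℕ) = p - 1 <;> simp [gB, hx] <;> rfl

open Fin.NatCast in
theorem aut_a_pow_apply_cons (n : ℕ) (x : Fin p) (w : Vert p) :
    ((aut_a p ^ n : AutT p) : Equiv.Perm (Vert p)) (x :: w) = (x + (n : Fin p)) :: w := by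
  induction n with
  | zero => simp
  | succ n ih =>
    rw [pow_succ', Subgroup.coe_mul, Equiv.Perm.mul_apply, ih]
    simp [aut_a, aPerm, gA, add_assoc]

open Fin.NatCast in
theorem aut_a_pow_self : aut_a p ^ p = 1 := by
  ext (_ | ⟨x, w⟩) : 2
  · exact apply_nil _
  · rw [aut_a_pow_apply_cons]
    simp

theorem aut_b_pow_self : aut_b p ^ p = 1 := by
  have hsec : aut_b p ^ p = ofSections fun x => if (x : ℕ) = p - 1 then aut_b p ^ p else 1 := by
    conv_lhs => rw [aut_b_eq_ofSections]
    rw [← map_pow]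
    congr 1
    ext x : 1
    split_ifs <;> simp [aut_a_pow_self, *]
  ext w : 2
  induction w with
  | nil => exact apply_nil _
  | cons x w ih =>
    rw [hsec, ofSections_apply_cons]
    split_ifs
    · rw [ih]; rfl
    · rfl

theorem rigidSectionsAt_le_rigidSectionsAt_add_one {H : Subgroup (AutT p)}
    (hH : aut_a p ∈ normalizer H) (i : Fin p) :
    rigidSectionsAt H i ≤ rigidSectionsAt H (i + 1) := by
  intro k hk
  rw [mem_rigidSectionsAt] at hk ⊢
  have hshift :
      (fun x => (Pi.mulSingle i k : Fin p → AutT p) (x - 1)) = Pi.mulSingle (i + 1) k := by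
    ext x : 1
    simp only [Pi.mulSingle_apply, sub_eq_iff_eq_add]
  rw [← hshift, ← aut_a_mul_ofSections_mul_inv]
  exact (hH _).1 hk

open Fin.NatCast in
theorem le_rigidSectionsAt {H L : Subgroup (AutT p)} (hH : aut_a p ∈ normalizer H)
    (hL : L ≤ rigidSectionsAt H 0) (i : Fin p) : L ≤ rigidSectionsAt H i := by
  rw [← Fin.cast_val_eq_self i]
  induction (i : ℕ) with
  | zero => simpa using hL
  | succ n ih =>
    rw [Nat.cast_succ]
    exact ih.trans (rigidSectionsAt_le_rigidSectionsAt_add_one hH _)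

end AutT

local notation "𝐚" => aut_a 3
local notation "𝐛" => aut_b 3
local notation "𝐜" => 𝐛 * 𝐚⁻¹
local notation "𝐮" => ⁅𝐚, 𝐛⁆
local notation "𝐲" => ⁅𝐜, 𝐚 * 𝐜 * 𝐚⁻¹⁆
local notation "𝐆" => GGS 3
local notation "𝐊" => GGSK 3

namespace GGS3

open AutT Subgroup

def tri (g₀ g₁ g₂ : AutT 3) : AutT 3 :=
  ofSections ![g₀, g₁, g₂]

@[simp]
theorem tri_mul (g₀ g₁ g₂ h₀ h₁ h₂ : AutT 3) :
    tri g₀ g₁ g₂ * tri h₀ h₁ h₂ = tri (g₀ * h₀) (g₁ * h₁) (g₂ * h₂) := by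
  rw [tri, tri, ← map_mul]
  congr 1
  ext i : 1
  fin_cases i <;> rfl

@[simp]
theorem tri_mul_assoc (g₀ g₁ g₂ h₀ h₁ h₂ x : AutT 3) :
    tri g₀ g₁ g₂ * (tri h₀ h₁ h₂ * x) = tri (g₀ * h₀) (g₁ * h₁) (g₂ * h₂) * x := by
  rw [← mul_assoc, tri_mul]

@[simp]
theorem tri_inv (g₀ g₁ g₂ : AutT 3) : (tri g₀ g₁ g₂)⁻¹ = tri g₀⁻¹ g₁⁻¹ g₂⁻¹ := by
  rw [tri, ← map_inv]
  congr 1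
  ext i : 1
  fin_cases i <;> rfl

theorem conj_tri (g₀ g₁ g₂ x₀ x₁ x₂ : AutT 3) :
    tri g₀ g₁ g₂ * tri x₀ x₁ x₂ * (tri g₀ g₁ g₂)⁻¹
      = tri (g₀ * x₀ * g₀⁻¹) (g₁ * x₁ * g₁⁻¹) (g₂ * x₂ * g₂⁻¹) := by
  rw [tri_inv, tri_mul, tri_mul]

theorem commutator_tri (x₀ x₁ x₂ y₀ y₁ y₂ : AutT 3) :
    ⁅tri x₀ x₁ x₂, tri y₀ y₁ y₂⁆ = tri ⁅x₀, y₀⁆ ⁅x₁, y₁⁆ ⁅x₂, y₂⁆ := by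
  simp only [commutatorElement_def, tri_inv, tri_mul]

theorem mem_rigidSectionsAt_zero {H : Subgroup (AutT 3)} {k : AutT 3} :
    k ∈ rigidSectionsAt H 0 ↔ tri k 1 1 ∈ H := by
  rw [mem_rigidSectionsAt, tri]
  convert Iff.rfl using 3
  ext i : 1
  fin_cases i <;> rfl

theorem tri_mem {H : Subgroup (AutT 3)} {g₀ g₁ g₂ : AutT 3} (h₀ : g₀ ∈ rigidSectionsAt H 0)
    (h₁ : g₁ ∈ rigidSectionsAt H 1) (h₂ : g₂ ∈ rigidSectionsAt H 2) : tri g₀ g₁ g₂ ∈ H :=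
  ofSections_mem fun i => by fin_cases i <;> assumption

theorem tri_mem_sectionsAt {H : Subgroup (AutT 3)} {g s t : AutT 3} (h : tri g s t ∈ H) :
    g ∈ sectionsAt H 0 :=
  mem_sectionsAt.2 ⟨_, h, rfl⟩

theorem exists_tri_mem {H : Subgroup (AutT 3)} {g : AutT 3} (hg : g ∈ sectionsAt H 0) :
    ∃ s t, tri g s t ∈ H := by
  obtain ⟨v, hv, rfl⟩ := mem_sectionsAt.1 hg
  refine ⟨v 1, v 2, ?_⟩
  convert hv using 1
  rw [tri]
  congr 1
  ext i : 1
  fin_cases i <;> rfl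

theorem conj_a_tri (g₀ g₁ g₂ : AutT 3) : 𝐚 * tri g₀ g₁ g₂ * 𝐚⁻¹ = tri g₂ g₀ g₁ := by
  rw [tri, aut_a_mul_ofSections_mul_inv]
  congr 1
  ext i : 1
  fin_cases i <;> rfl

@[simp]
theorem a_mul_tri (g₀ g₁ g₂ : AutT 3) : 𝐚 * tri g₀ g₁ g₂ = tri g₂ g₀ g₁ * 𝐚 := by
  rw [← conj_a_tri g₀ g₁ g₂, inv_mul_cancel_right]

@[simp]
theorem a_mul_tri_assoc (g₀ g₁ g₂ x : AutT 3) :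
    𝐚 * (tri g₀ g₁ g₂ * x) = tri g₂ g₀ g₁ * (𝐚 * x) := by
  rw [← mul_assoc, a_mul_tri, mul_assoc]

@[simp]
theorem a_inv_mul_tri (g₀ g₁ g₂ : AutT 3) : 𝐚⁻¹ * tri g₀ g₁ g₂ = tri g₁ g₂ g₀ * 𝐚⁻¹ := by
  rw [← conj_a_tri g₁ g₂ g₀]
  group

@[simp]
theorem a_inv_mul_tri_assoc (g₀ g₁ g₂ x : AutT 3) :
    𝐚⁻¹ * (tri g₀ g₁ g₂ * x) = tri g₁ g₂ g₀ * (𝐚⁻¹ * x) := by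
  rw [← mul_assoc, a_inv_mul_tri, mul_assoc]

theorem conj_a_inv_tri (g₀ g₁ g₂ : AutT 3) : 𝐚⁻¹ * tri g₀ g₁ g₂ * 𝐚 = tri g₁ g₂ g₀ := by
  rw [a_inv_mul_tri, inv_mul_cancel_right]

theorem b_eq_tri : 𝐛 = tri 𝐚 𝐚 𝐛 := by
  conv_lhs => rw [aut_b_eq_ofSections]
  congr 1
  ext i : 1
  fin_cases i <;> rfl

theorem conj_b_tri (g₀ g₁ g₂ : AutT 3) :
    𝐛 * tri g₀ g₁ g₂ * 𝐛⁻¹ = tri (𝐚 * g₀ * 𝐚⁻¹) (𝐚 * g₁ * 𝐚⁻¹) (𝐛 * g₂ * 𝐛⁻¹) := by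
  conv_lhs => rw [b_eq_tri]
  rw [conj_tri]

@[simp]
theorem a_mul_a : 𝐚 * 𝐚 = 𝐚⁻¹ :=
  eq_inv_of_mul_eq_one_left (by rw [← pow_two, ← pow_succ, aut_a_pow_self])

@[simp]
theorem a_mul_a_assoc (x : AutT 3) : 𝐚 * (𝐚 * x) = 𝐚⁻¹ * x := by
  rw [← mul_assoc, a_mul_a]

@[simp]
theorem a_inv_mul_a_inv : 𝐚⁻¹ * 𝐚⁻¹ = 𝐚 := by
  rw [← mul_inv_rev, a_mul_a, inv_inv]

@[simp]
theorem a_inv_mul_a_inv_assoc (x : AutT 3) : 𝐚⁻¹ * (𝐚⁻¹ * x) = 𝐚 * x := by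
  rw [← mul_assoc, a_inv_mul_a_inv]

@[simp]
theorem b_mul_b : 𝐛 * 𝐛 = 𝐛⁻¹ :=
  eq_inv_of_mul_eq_one_left (by rw [← pow_two, ← pow_succ, aut_b_pow_self])

@[simp]
theorem b_mul_b_assoc (x : AutT 3) : 𝐛 * (𝐛 * x) = 𝐛⁻¹ * x := by
  rw [← mul_assoc, b_mul_b]

@[simp]
theorem b_inv_mul_b_inv : 𝐛⁻¹ * 𝐛⁻¹ = 𝐛 := by
  rw [← mul_inv_rev, b_mul_b, inv_inv]

@[simp]
theorem b_inv_mul_b_inv_assoc (x : AutT 3) : 𝐛⁻¹ * (𝐛⁻¹ * x) = 𝐛 * x := by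
  rw [← mul_assoc, b_inv_mul_b_inv]

theorem isOfFinOrder_a : IsOfFinOrder 𝐚 :=
  isOfFinOrder_iff_pow_eq_one.2 ⟨3, by norm_num, aut_a_pow_self⟩

theorem isOfFinOrder_b : IsOfFinOrder 𝐛 :=
  isOfFinOrder_iff_pow_eq_one.2 ⟨3, by norm_num, aut_b_pow_self⟩

theorem commutator_a_b : 𝐮 = tri 𝐜 1 𝐜⁻¹ := by
  conv_lhs => rw [commutatorElement_def, b_eq_tri]
  rw [conj_a_tri, tri_inv, tri_mul]
  congr 1
  group

theorem commutator_c_conj_a_c :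
    𝐲 = tri (𝐚 * 𝐛⁻¹) (𝐚⁻¹ * (𝐛⁻¹ * 𝐚⁻¹)) (𝐛⁻¹ * 𝐚) := by
  conv_lhs => rw [commutatorElement_def, b_eq_tri]
  simp [mul_assoc]

theorem conj_b_u :
    𝐛 * 𝐮 * 𝐛⁻¹ = tri 𝐲⁻¹ 1 ⁅𝐜, (𝐚 * 𝐜 * 𝐚⁻¹)⁻¹⁆ * (𝐚 * 𝐲 * 𝐚⁻¹) * (𝐚 * 𝐮 * 𝐚⁻¹) := by
  rw [commutator_a_b, conj_b_tri, conj_a_tri]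
  nth_rewrite 2 [commutator_c_conj_a_c]
  rw [conj_a_tri]
  simp only [tri_mul]
  congr 1 <;> simp [commutatorElement_def, mul_assoc]

theorem conj_b_conj_a_u :
    𝐛 * (𝐚 * 𝐮 * 𝐚⁻¹) * 𝐛⁻¹ = tri 1 𝐲⁻¹ 1 * (𝐚⁻¹ * 𝐲 * 𝐚) * (𝐚⁻¹ * 𝐮 * 𝐚) := by
  rw [commutator_a_b, conj_a_tri, conj_b_tri]
  nth_rewrite 2 [commutator_c_conj_a_c]
  rw [conj_a_inv_tri]
  simp [commutatorElement_def, mul_assoc]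

theorem conj_b_conj_a_inv_u : 𝐛 * (𝐚⁻¹ * 𝐮 * 𝐚) * 𝐛⁻¹ = 𝐲 * 𝐮 := by
  simp [commutatorElement_def, mul_assoc]

theorem a_mem : 𝐚 ∈ 𝐆 := subset_closure (by simp)

theorem b_mem : 𝐛 ∈ 𝐆 := subset_closure (by simp)

theorem c_mem : 𝐜 ∈ 𝐊 := subset_closure ⟨1, one_mem _, by group⟩

theorem K_le_G : 𝐊 ≤ 𝐆 := by
  refine (closure_le _).2 ?_
  rintro _ ⟨g, hg, rfl⟩
  exact mul_mem (mul_mem hg (mul_mem b_mem (inv_mem a_mem))) (inv_mem hg)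

theorem G_le_normalizer_K : 𝐆 ≤ normalizer 𝐊 := by
  refine le_normalizer_closure_iff.2 ?_
  rintro h hh _ ⟨g, hg, rfl⟩
  exact subset_closure ⟨h * g, mul_mem hh hg, by group⟩

theorem G_le_normalizer_commutator_K : 𝐆 ≤ normalizer (⁅𝐊, 𝐊⁆ : Subgroup (AutT 3)) :=
  le_normalizer_commutator G_le_normalizer_K G_le_normalizer_K

theorem conj_a_c_mem : 𝐚 * 𝐜 * 𝐚⁻¹ ∈ 𝐊 :=
  le_normalizer_iff.1 G_le_normalizer_K _ a_mem _ c_mem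

theorem commutator_a_b_mem : 𝐮 ∈ 𝐊 := by
  have h : 𝐮 = 𝐚 * 𝐜 * 𝐚⁻¹ * 𝐜⁻¹ := by rw [commutatorElement_def]; group
  rw [h]
  exact mul_mem conj_a_c_mem (inv_mem c_mem)

theorem G_le_sectionsAt : 𝐆 ≤ sectionsAt 𝐆 0 := by
  refine (closure_le _).2 ?_
  rintro _ (rfl | rfl)
  · refine tri_mem_sectionsAt (s := 𝐚) (t := 𝐛) ?_
    rw [← b_eq_tri]
    exact b_mem
  · refine tri_mem_sectionsAt (s := 𝐚) (t := 𝐚) ?_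
    rw [← conj_a_tri, ← b_eq_tri]
    exact mul_mem (mul_mem a_mem b_mem) (inv_mem a_mem)

theorem commutator_conj_c_mem_rigidSectionsAt {g h : AutT 3} (hg : g ∈ 𝐆) (hh : h ∈ 𝐆) :
    ⁅g * 𝐜 * g⁻¹, h * 𝐜 * h⁻¹⁆ ∈ rigidSectionsAt ⁅𝐊, 𝐊⁆ 0 := by
  obtain ⟨s, t, hgst⟩ := exists_tri_mem (G_le_sectionsAt hg)
  obtain ⟨s', t', hhst⟩ := exists_tri_mem (G_le_sectionsAt hh)
  have hconj := le_normalizer_iff.1 G_le_normalizer_K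
  have hu : tri (g * 𝐜 * g⁻¹) 1 (t * 𝐜⁻¹ * t⁻¹) ∈ 𝐊 := by
    have := hconj _ hgst _ commutator_a_b_mem
    rwa [commutator_a_b, conj_tri, mul_one, mul_inv_cancel] at this
  have hv : tri (h * 𝐜 * h⁻¹) (s' * 𝐜⁻¹ * s'⁻¹) 1 ∈ 𝐊 := by
    have := hconj _ hhst _ (inv_mem (hconj _ a_mem _ commutator_a_b_mem))
    rwa [commutator_a_b, conj_a_tri, tri_inv, conj_tri, inv_inv, inv_one, mul_one,
      mul_inv_cancel] at this
  rw [mem_rigidSectionsAt_zero]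
  simpa only [commutator_tri, commutatorElement_one_left, commutatorElement_one_right] using
    commutator_mem_commutator hu hv

theorem commutator_K_le_rigidSectionsAt_zero : ⁅𝐊, 𝐊⁆ ≤ rigidSectionsAt ⁅𝐊, 𝐊⁆ 0 := by
  refine commutator_closure_le ?_ ?_
  · exact K_le_G.trans <| G_le_sectionsAt.trans <|
      sectionsAt_le_normalizer_rigidSectionsAt G_le_normalizer_commutator_K 0
  · rintro _ ⟨g, hg, rfl⟩ _ ⟨h, hh, rfl⟩
    exact commutator_conj_c_mem_rigidSectionsAt hg hh

theorem commutator_K_le_rigidSectionsAt (i : Fin 3) : ⁅𝐊, 𝐊⁆ ≤ rigidSectionsAt ⁅𝐊, 𝐊⁆ i :=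
  le_rigidSectionsAt (G_le_normalizer_commutator_K a_mem) commutator_K_le_rigidSectionsAt_zero i

theorem K_le_sectionsAt : 𝐊 ≤ sectionsAt ⁅𝐊, 𝐊⁆ 0 := by
  have hN : 𝐆 ≤ normalizer (sectionsAt ⁅𝐊, 𝐊⁆ 0) := G_le_sectionsAt.trans <|
    sectionsAt_le_normalizer_sectionsAt G_le_normalizer_commutator_K 0
  have hc : 𝐜 ∈ sectionsAt ⁅𝐊, 𝐊⁆ 0 := by
    have hY : 𝐲 ∈ ⁅𝐊, 𝐊⁆ := commutator_mem_commutator c_mem conj_a_c_mem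
    rw [commutator_c_conj_a_c] at hY
    simpa using inv_mem (tri_mem_sectionsAt hY)
  refine (closure_le _).2 ?_
  rintro _ ⟨g, hg, rfl⟩
  exact le_normalizer_iff.1 hN _ hg _ hc

theorem commutator_commutator_K_le : ⁅⁅𝐊, 𝐊⁆, 𝐊⁆ ≤ rigidSectionsAt ⁅⁅𝐊, 𝐊⁆, ⁅𝐊, 𝐊⁆⁆ 0 :=
  (commutator_mono commutator_K_le_rigidSectionsAt_zero K_le_sectionsAt).trans
    (commutator_rigidSectionsAt_sectionsAt_le _ _ 0)

def A : Subgroup (AutT 3) :=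
  closure {𝐮, 𝐚 * 𝐮 * 𝐚⁻¹, 𝐚⁻¹ * 𝐮 * 𝐚}

theorem A_le_K : A ≤ 𝐊 := by
  have hconj := le_normalizer_iff.1 G_le_normalizer_K
  refine (closure_le _).2 ?_
  rintro _ (rfl | rfl | rfl)
  · exact commutator_a_b_mem
  · exact hconj _ a_mem _ commutator_a_b_mem
  · simpa using hconj _ (inv_mem a_mem) _ commutator_a_b_mem

instance : IsMulCommutative A := by
  refine isMulCommutative_closure ?_
  rintro _ (rfl | rfl | rfl) _ (rfl | rfl | rfl) <;> simp [commutator_a_b]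

theorem a_mem_normalizer_A : 𝐚 ∈ normalizer A := by
  refine mem_normalizer_of_conj_mem isOfFinOrder_a fun x hx => ?_
  have hmap : A.map (MulAut.conj 𝐚) ≤ A := by
    rw [A, MonoidHom.map_closure]
    refine closure_mono ?_
    rintro _ ⟨x, hx, rfl⟩
    simp only [MonoidHom.coe_coe, MulAut.conj_apply, Set.mem_insert_iff, Set.mem_singleton_iff]
    rcases hx with rfl | rfl | rfl
    · exact .inr (.inl rfl)
    · refine .inr (.inr ?_)
      simp only [mul_assoc, a_mul_a_assoc, a_inv_mul_a_inv]
    · exact .inl (by group)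
  exact hmap ⟨x, hx, rfl⟩

def V : Subgroup (AutT 3) := ⁅𝐊, 𝐊⁆ ⊔ A

theorem conj_b_mem_V {x : AutT 3} (hx : x ∈ ({𝐮, 𝐚 * 𝐮 * 𝐚⁻¹, 𝐚⁻¹ * 𝐮 * 𝐚} : Set (AutT 3))) :
    𝐛 * x * 𝐛⁻¹ ∈ V := by
  have hK' := le_normalizer_iff.1 G_le_normalizer_commutator_K
  have hY : 𝐲 ∈ ⁅𝐊, 𝐊⁆ := commutator_mem_commutator c_mem conj_a_c_mem
  have hA : ∀ y ∈ ({𝐮, 𝐚 * 𝐮 * 𝐚⁻¹, 𝐚⁻¹ * 𝐮 * 𝐚} : Set (AutT 3)), y ∈ V :=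
    fun y hy => mem_sup_right (subset_closure hy)
  rcases hx with rfl | rfl | rfl
  · rw [conj_b_u]
    refine mul_mem (mul_mem (mem_sup_left (tri_mem ?_ (one_mem _) ?_))
      (mem_sup_left (hK' _ a_mem _ hY))) (hA _ (by simp))
    · exact commutator_K_le_rigidSectionsAt 0 (inv_mem hY)
    · exact commutator_K_le_rigidSectionsAt 2
        (commutator_mem_commutator c_mem (inv_mem conj_a_c_mem))
  · rw [conj_b_conj_a_u]
    refine mul_mem (mul_mem (mem_sup_left (tri_mem (one_mem _) ?_ (one_mem _)))
      (mem_sup_left ?_)) (hA _ (by simp))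
    · exact commutator_K_le_rigidSectionsAt 1 (inv_mem hY)
    · simpa using hK' _ (inv_mem a_mem) _ hY
  · rw [conj_b_conj_a_inv_u]
    exact mul_mem (mem_sup_left hY) (hA _ (by simp))

theorem G_le_normalizer_V : 𝐆 ≤ normalizer V := by
  have hK' := G_le_normalizer_commutator_K
  refine (closure_le _).2 ?_
  rintro _ (rfl | rfl)
  · exact normalizer_inf_normalizer_le_normalizer_sup _ _ ⟨hK' a_mem, a_mem_normalizer_A⟩
  refine mem_normalizer_of_conj_mem isOfFinOrder_b fun x hx => ?_
  have hmap : V.map (MulAut.conj 𝐛) ≤ V := by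
    rw [V, Subgroup.map_sup, mem_normalizer_iff_map_conj_eq.1 (hK' b_mem), A,
      MonoidHom.map_closure]
    refine sup_le le_sup_left ((closure_le _).2 ?_)
    rintro _ ⟨x, hx, rfl⟩
    exact conj_b_mem_V hx
  exact hmap ⟨x, hx, rfl⟩

theorem commutator_G_le_V : ⁅𝐆, 𝐆⁆ ≤ V := by
  refine commutator_closure_le G_le_normalizer_V ?_
  have hu : 𝐮 ∈ V := mem_sup_right (subset_closure (by simp))
  rintro _ (rfl | rfl) _ (rfl | rfl)
  · simp
  · exact hu
  · rw [← commutatorElement_inv]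
    exact inv_mem hu
  · simp

theorem commutator_V_le : ⁅V, V⁆ ≤ ⁅⁅𝐊, 𝐊⁆, 𝐊⁆ := by
  have hV : V = closure ((⁅𝐊, 𝐊⁆ : Subgroup (AutT 3)) ∪ A : Set (AutT 3)) := by
    rw [Subgroup.closure_union, closure_eq, closure_eq, V]
  have hVK : V ≤ 𝐊 := sup_le (commutator_le_self _) A_le_K
  rw [hV]
  refine commutator_closure_le ?_ ?_
  · rw [← hV]
    exact hVK.trans <| K_le_G.trans <|
      le_normalizer_commutator G_le_normalizer_commutator_K G_le_normalizer_K
  rintro x (hx | hx) y (hy | hy)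
  · exact commutator_mem_commutator hx (commutator_le_self _ hy)
  · exact commutator_mem_commutator hx (A_le_K hy)
  · rw [← commutatorElement_inv]
    exact inv_mem (commutator_mem_commutator hy (A_le_K hx))
  · rw [commutatorElement_eq_one_iff_mul_comm.2 (setLike_mul_comm hx hy)]
    exact one_mem _

theorem commutator_commutator_G_le : ⁅⁅𝐆, 𝐆⁆, ⁅𝐆, 𝐆⁆⁆ ≤ ⁅⁅𝐊, 𝐊⁆, 𝐊⁆ :=
  (commutator_mono commutator_G_le_V commutator_G_le_V).trans commutator_V_le

theorem ofSections_mem_of_forall_mem {g : Fin 3 → AutT 3}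
    (hg : ∀ i, g i ∈ ⁅⁅𝐆, 𝐆⁆, ⁅𝐆, 𝐆⁆⁆) : ofSections g ∈ ⁅⁅𝐊, 𝐊⁆, ⁅𝐊, 𝐊⁆⁆ := by
  have hK'' : 𝐆 ≤ normalizer (⁅⁅𝐊, 𝐊⁆, ⁅𝐊, 𝐊⁆⁆ : Subgroup (AutT 3)) :=
    le_normalizer_commutator G_le_normalizer_commutator_K G_le_normalizer_commutator_K
  have hG'' : ⁅⁅𝐆, 𝐆⁆, ⁅𝐆, 𝐆⁆⁆ ≤ rigidSectionsAt ⁅⁅𝐊, 𝐊⁆, ⁅𝐊, 𝐊⁆⁆ 0 :=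
    commutator_commutator_G_le.trans commutator_commutator_K_le
  exact ofSections_mem fun i => le_rigidSectionsAt (hK'' a_mem) hG'' i (hg i)

end GGS3

/-- Proposition 4.8: for the GGS-group `G` with constant defining
vector and `p = 3`, `ψ(K'') ⊇ G'' × G'' × G''` where `K = ⟨ba⁻¹⟩^G`: every tree
automorphism whose three first-level sections lie in `G''` belongs to `K''`. -/
theorem stmt_14 :
    {f : AutT 3 | ∀ x : Fin 3, ∃ g ∈ ⁅⁅GGS 3, GGS 3⁆, ⁅GGS 3, GGS 3⁆⁆,
        ∀ w : Vert 3, (f : Equiv.Perm (Vert 3)) (x :: w)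
          = x :: (g : Equiv.Perm (Vert 3)) w}
      ⊆ ((⁅⁅GGSK 3, GGSK 3⁆, ⁅GGSK 3, GGSK 3⁆⁆ : Subgroup (AutT 3)) : Set (AutT 3)) := by
  intro f hf
  choose g hg hfg using hf
  rw [AutT.eq_ofSections hfg]
  exact GGS3.ofSections_mem_of_forall_mem hg
end

section
/- Let G = ⟨a,b⟩ be the Basilica group acting on the binary tree, where a = (1,b) and b = (1,a)ε. Let A = ⟨a⟩^G and B = ⟨b⟩^G be the normal closures. Then G' = A ∩ B. -/
section Basilica

/-- The two generators of the Basilica group, defined by mutual recursion: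
`bas false` is the action of `a = (1, b)` and `bas true` is the action of
`b = (1, a)ε` on the binary tree. -/
def bas : Bool → List (Fin 2) → List (Fin 2)
  | _, [] => []
  | false, x :: w => if x = 0 then 0 :: w else 1 :: bas true w
  | true, x :: w => if x = 0 then 1 :: w else 0 :: bas false w

/-- The inverses of the two generators of the Basilica group. -/
def basI : Bool → List (Fin 2) → List (Fin 2)
  | _, [] => []
  | false, x :: w => if x = 0 then 0 :: w else 1 :: basI true w
  | true, x :: w => if x = 0 then 1 :: basI false w else 0 :: w

theorem fin2_eq_one {x : Fin 2} (h : ¬ x = 0) : x = 1 := by omega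

theorem basI_bas : ∀ (fl : Bool) (l : List (Fin 2)), basI fl (bas fl l) = l
  | false, [] => rfl
  | true, [] => rfl
  | false, x :: w => by
    by_cases h : x = 0
    · simp [bas, basI, h]
    · simp [bas, basI, h, fin2_eq_one h, basI_bas true w]
  | true, x :: w => by
    by_cases h : x = 0
    · simp [bas, basI, h]
    · simp [bas, basI, h, fin2_eq_one h, basI_bas false w]

theorem bas_basI : ∀ (fl : Bool) (l : List (Fin 2)), bas fl (basI fl l) = l
  | false, [] => rfl
  | true, [] => rfl
  | false, x :: w => by
    by_cases h : x = 0
    · simp [bas, basI, h]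
    · simp [bas, basI, h, fin2_eq_one h, bas_basI true w]
  | true, x :: w => by
    by_cases h : x = 0
    · simp [bas, basI, h, bas_basI false w]
    · simp [bas, basI, h, fin2_eq_one h]

/-- The generators of the Basilica group as permutations of the vertex set. -/
def basPerm (fl : Bool) : Equiv.Perm (Vert 2) :=
  ⟨bas fl, basI fl, basI_bas fl, bas_basI fl⟩

theorem bas_append : ∀ (fl : Bool) (v : Vert 2) (i : Fin 2),
    ∃ j, bas fl (v ++ [i]) = bas fl v ++ [j]
  | false, [], i => by
    by_cases h : i = 0
    · exact ⟨i, by simp [bas, h]⟩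
    · exact ⟨i, by simp [bas, h, fin2_eq_one h]⟩
  | true, [], i => by
    by_cases h : i = 0
    · exact ⟨1, by simp [bas, h]⟩
    · exact ⟨0, by simp [bas, h, fin2_eq_one h]⟩
  | false, x :: w, i => by
    by_cases h : x = 0
    · exact ⟨i, by simp [bas, h]⟩
    · obtain ⟨j, hj⟩ := bas_append true w i
      exact ⟨j, by simp [bas, h, fin2_eq_one h, hj]⟩
  | true, x :: w, i => by
    by_cases h : x = 0
    · exact ⟨i, by simp [bas, h]⟩
    · obtain ⟨j, hj⟩ := bas_append false w i
      exact ⟨j, by simp [bas, h, fin2_eq_one h, hj]⟩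

theorem basI_append : ∀ (fl : Bool) (v : Vert 2) (i : Fin 2),
    ∃ j, basI fl (v ++ [i]) = basI fl v ++ [j]
  | false, [], i => by
    by_cases h : i = 0
    · exact ⟨i, by simp [basI, h]⟩
    · exact ⟨i, by simp [basI, h, fin2_eq_one h]⟩
  | true, [], i => by
    by_cases h : i = 0
    · exact ⟨1, by simp [basI, h]⟩
    · exact ⟨0, by simp [basI, h, fin2_eq_one h]⟩
  | false, x :: w, i => by
    by_cases h : x = 0
    · exact ⟨i, by simp [basI, h]⟩
    · obtain ⟨j, hj⟩ := basI_append true w i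
      exact ⟨j, by simp [basI, h, fin2_eq_one h, hj]⟩
  | true, x :: w, i => by
    by_cases h : x = 0
    · obtain ⟨j, hj⟩ := basI_append false w i
      exact ⟨j, by simp [basI, h, hj]⟩
    · exact ⟨i, by simp [basI, h, fin2_eq_one h]⟩

/-- The generator `a = (1, b)` of the Basilica group, as a tree automorphism. -/
def bas_a : AutT 2 := ⟨basPerm false, bas_append false, basI_append false⟩

/-- The generator `b = (1, a)ε` of the Basilica group, as a tree automorphism. -/
def bas_b : AutT 2 := ⟨basPerm true, bas_append true, basI_append true⟩

/-- The Basilica group `G = ⟨a, b⟩`. -/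
def Basilica : Subgroup (AutT 2) :=
  Subgroup.closure {bas_a, bas_b}

/-- The normal closure `⟨a⟩^G` of `a` in the Basilica group. -/
def BasA : Subgroup (AutT 2) :=
  Subgroup.closure {x | ∃ g ∈ Basilica, x = g * bas_a * g⁻¹}

/-- The normal closure `⟨b⟩^G` of `b` in the Basilica group. -/
def BasB : Subgroup (AutT 2) :=
  Subgroup.closure {x | ∃ g ∈ Basilica, x = g * bas_b * g⁻¹}

end Basilica

/-!
A word in `a, b` that is trivial in `G` has trivial root permutation, so it has an even number of
`b`-letters, and its two sections are again trivial words; as `a = (1, b)` and `b = (1, a)ε`, the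
exponent sum of `a` (resp. `b`) in the word is the sum of the exponent sums of `b` (resp. `a`) in
the two sections, whose lengths add up to that of the word. An induction on the length shows that
both exponent sums of a trivial word vanish, i.e. the exponent sums define a homomorphism
`G → ℤ²`; hence `a ^ n * b ^ m ∈ G'` forces `n = m = 0`. On the other hand `G = A ⟨b⟩ = B ⟨a⟩`,
so `G' ≤ A ⊓ B` and every element of `A` (resp. `B`) is `a ^ n` (resp. `b ^ m`) modulo `G'`; an
element of `A ⊓ B` then gives `a ^ n b ^ (-m) ∈ G'`, so `n = 0` and the element lies in `G'`.
-/

open scoped commutatorElement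

namespace Subgroup

variable {H : Type*} [Group H]

/-- The normal closure `⟨c⟩^G` of `c` in `G`, as a subgroup of the ambient group `H`
(unlike `Subgroup.normalClosure`, only conjugates by elements of `G` are taken). -/
def conjClosureIn (G : Subgroup H) (c : H) : Subgroup H :=
  closure {x | ∃ g ∈ G, x = g * c * g⁻¹}

variable {G : Subgroup H} {c : H}

theorem self_mem_conjClosureIn : c ∈ G.conjClosureIn c :=
  subset_closure ⟨1, G.one_mem, by group⟩

theorem conj_mem_conjClosureIn {g x : H} (hg : g ∈ G) (hx : x ∈ G.conjClosureIn c) :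
    g * x * g⁻¹ ∈ G.conjClosureIn c := by
  have hmap : (G.conjClosureIn c).map (MulAut.conj g).toMonoidHom ≤ G.conjClosureIn c := by
    rw [conjClosureIn, MonoidHom.map_closure, closure_le]
    rintro _ ⟨_, ⟨h, hh, rfl⟩, rfl⟩
    exact subset_closure ⟨g * h, mul_mem hg hh, by simp [MulAut.conj_apply]; group⟩
  exact hmap ⟨x, hx, rfl⟩

theorem conj_mem_commutator {g x : H} (hg : g ∈ G) (hx : x ∈ ⁅G, G⁆) :
    g * x * g⁻¹ ∈ ⁅G, G⁆ :=
  (mem_normalizer_iff.mp (normalizer_commutator_ge_left G G hg) x).mp hx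

theorem exists_mem_conjClosureIn_mul_zpow {a b : H} {x : H} (hx : x ∈ closure {a, b}) :
    ∃ d ∈ (closure {a, b}).conjClosureIn a, ∃ n : ℤ, x = d * b ^ n := by
  have hb : b ∈ closure {a, b} := subset_closure (by simp)
  induction hx using closure_induction with
  | mem y hy =>
    rcases hy with rfl | rfl
    · exact ⟨y, self_mem_conjClosureIn, 0, by group⟩
    · exact ⟨1, one_mem _, 1, by group⟩
  | one => exact ⟨1, one_mem _, 0, by group⟩
  | mul y z _ _ ihy ihz =>
    obtain ⟨d, hd, n, rfl⟩ := ihy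
    obtain ⟨e, he, m, rfl⟩ := ihz
    exact ⟨d * (b ^ n * e * (b ^ n)⁻¹),
      mul_mem hd (conj_mem_conjClosureIn (zpow_mem hb n) he), n + m, by group⟩
  | inv y _ ihy =>
    obtain ⟨d, hd, n, rfl⟩ := ihy
    refine ⟨b ^ (-n) * d⁻¹ * (b ^ (-n))⁻¹,
      conj_mem_conjClosureIn (zpow_mem hb (-n)) (inv_mem hd), -n, by group⟩

theorem commutator_closure_pair_le_conjClosureIn (a b : H) :
    ⁅closure {a, b}, closure {a, b}⁆ ≤ (closure {a, b}).conjClosureIn a := by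
  rw [commutator_le]
  intro g hg h hh
  obtain ⟨d, hd, n, rfl⟩ := exists_mem_conjClosureIn_mul_zpow hg
  obtain ⟨e, he, m, rfl⟩ := exists_mem_conjClosureIn_mul_zpow hh
  have hb : b ∈ closure {a, b} := subset_closure (by simp)
  have : ⁅d * b ^ n, e * b ^ m⁆
      = d * (b ^ n * e * (b ^ n)⁻¹) * (b ^ m * d⁻¹ * (b ^ m)⁻¹) * e⁻¹ := by
    rw [commutatorElement_def]; group
  rw [this]
  exact mul_mem (mul_mem (mul_mem hd (conj_mem_conjClosureIn (zpow_mem hb n) he))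
    (conj_mem_conjClosureIn (zpow_mem hb m) (inv_mem hd))) (inv_mem he)

theorem exists_zpow_mul_mem_commutator (hc : c ∈ G) {x : H} (hx : x ∈ G.conjClosureIn c) :
    ∃ n : ℤ, ∃ d ∈ ⁅G, G⁆, x = c ^ n * d := by
  induction hx using closure_induction with
  | mem y hy =>
    obtain ⟨g, hg, rfl⟩ := hy
    exact ⟨1, ⁅c⁻¹, g⁆, commutator_mem_commutator (inv_mem hc) hg,
      by rw [commutatorElement_def]; group⟩
  | one => exact ⟨0, 1, one_mem _, by group⟩
  | mul y z _ _ ihy ihz =>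
    obtain ⟨n, d, hd, rfl⟩ := ihy
    obtain ⟨m, e, he, rfl⟩ := ihz
    exact ⟨n + m, c ^ (-m) * d * (c ^ (-m))⁻¹ * e,
      mul_mem (conj_mem_commutator (zpow_mem hc (-m)) hd) he, by group⟩
  | inv y _ ihy =>
    obtain ⟨n, d, hd, rfl⟩ := ihy
    exact ⟨-n, c ^ n * d⁻¹ * (c ^ n)⁻¹, conj_mem_commutator (zpow_mem hc n) (inv_mem hd),
      by group⟩

theorem commutator_closure_pair_eq_inf {a b : H}
    (hab : ∀ n m : ℤ, a ^ n * b ^ m ∈ ⁅closure {a, b}, closure {a, b}⁆ →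
      a ^ n ∈ ⁅closure {a, b}, closure {a, b}⁆) :
    ⁅closure {a, b}, closure {a, b}⁆ =
      (closure {a, b}).conjClosureIn a ⊓ (closure {a, b}).conjClosureIn b := by
  refine le_antisymm (le_inf (commutator_closure_pair_le_conjClosureIn a b) ?_) ?_
  · rw [Set.pair_comm]; exact commutator_closure_pair_le_conjClosureIn b a
  rintro x ⟨hxa, hxb⟩
  obtain ⟨n, c, hc, rfl⟩ := exists_zpow_mul_mem_commutator (subset_closure (by simp)) hxa
  obtain ⟨m, d, hd, hx⟩ := exists_zpow_mul_mem_commutator (subset_closure (by simp)) hxb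
  have : a ^ (-n) * b ^ m ∈ ⁅closure {a, b}, closure {a, b}⁆ := by
    have : a ^ (-n) * b ^ m = c * d⁻¹ := by
      rw [zpow_neg, ← mul_inv_eq_iff_eq_mul.mpr hx.symm]; group
    rw [this]; exact mul_mem hc (inv_mem hd)
  have := inv_mem (hab _ _ this)
  rw [zpow_neg, inv_inv] at this
  exact mul_mem this hc

end Subgroup

namespace Basilica

/-- A letter of a word in the free group on `a = of false`, `b = of true`: `(t, s)` stands for
`(cond t b a) ^ (cond s 1 (-1))`, following `FreeGroup.mk`. -/
abbrev Letter := Bool × Bool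

def eval : FreeGroup Bool →* AutT 2 := FreeGroup.lift fun t => cond t bas_b bas_a

/-- The section of a letter at the vertex `q` of the first level (`false ↦ 0`, `true ↦ 1`),
read off from `a = (1, b)`, `b = (1, a)ε` and `b⁻¹ = (a⁻¹, 1)ε`. -/
def letterSection : Letter → Bool → List Letter
  | (false, _), false => []
  | (false, s), true => [(true, s)]
  | (true, true), false => []
  | (true, true), true => [(false, true)]
  | (true, false), false => [(false, false)]
  | (true, false), true => []

def rootSwap : List Letter → Bool
  | [] => false
  | x :: L => xor (rootSwap L) x.1

/-- The section at the vertex `p` of the first level, as a word: each letter contributes its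
section at the vertex to which the letters to its right have moved `p`. -/
def sectionWord : List Letter → Bool → List Letter
  | [], _ => []
  | x :: L, p => letterSection x (xor p (rootSwap L)) ++ sectionWord L p

def expSum (t : Bool) (L : List Letter) : ℤ :=
  (L.map fun x => if x.1 = t then cond x.2 1 (-1) else 0).sum

theorem eval_mk_append (L M : List Letter) :
    eval (FreeGroup.mk (L ++ M)) = eval (FreeGroup.mk L) * eval (FreeGroup.mk M) := by
  rw [← map_mul, FreeGroup.mul_mk]

theorem eval_letter_apply_cons (x : Letter) (q : Bool) (w : Vert 2) :
    (eval (FreeGroup.mk [x])).1 (cond q 1 0 :: w) =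
      cond (xor q x.1) 1 0 :: (eval (FreeGroup.mk (letterSection x q))).1 w := by
  rcases x with ⟨_ | _, _ | _⟩ <;> cases q <;> rfl

theorem eval_apply_cons (L : List Letter) (p : Bool) (w : Vert 2) :
    (eval (FreeGroup.mk L)).1 (cond p 1 0 :: w) =
      cond (xor p (rootSwap L)) 1 0 :: (eval (FreeGroup.mk (sectionWord L p))).1 w := by
  induction L generalizing w with
  | nil => cases p <;> rfl
  | cons x L ih =>
    rw [sectionWord, rootSwap, ← List.singleton_append, eval_mk_append, Subgroup.coe_mul,
      Equiv.Perm.mul_apply, ih, eval_letter_apply_cons, eval_mk_append, Subgroup.coe_mul,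
      Equiv.Perm.mul_apply, Bool.xor_assoc]

theorem rootSwap_eq_false {L : List Letter} (h : eval (FreeGroup.mk L) = 1) :
    rootSwap L = false := by
  have := eval_apply_cons L false []
  rw [h] at this
  cases hs : rootSwap L
  · rfl
  · simp [hs] at this

theorem eval_sectionWord_eq_one {L : List Letter} (h : eval (FreeGroup.mk L) = 1) (p : Bool) :
    eval (FreeGroup.mk (sectionWord L p)) = 1 := by
  refine Subtype.ext (Equiv.ext fun w => ?_)
  have := eval_apply_cons L p w
  rw [h, rootSwap_eq_false h] at this
  simpa using this.symm

@[simp] theorem expSum_cons (t : Bool) (x : Letter) (L : List Letter) :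
    expSum t (x :: L) = (if x.1 = t then cond x.2 1 (-1) else 0) + expSum t L := by
  simp [expSum]

@[simp] theorem expSum_append (t : Bool) (L M : List Letter) :
    expSum t (L ++ M) = expSum t L + expSum t M := by
  simp [expSum]

theorem expSum_eq_expSum_sectionWord (t : Bool) (L : List Letter) :
    expSum t L = expSum (!t) (sectionWord L false) + expSum (!t) (sectionWord L true) := by
  induction L with
  | nil => rfl
  | cons x L ih =>
    have hx : ∀ q, (if x.1 = t then cond x.2 1 (-1) else 0) =
        expSum (!t) (letterSection x q) + expSum (!t) (letterSection x (!q)) := by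
      intro q
      rcases x with ⟨_ | _, _ | _⟩ <;> cases q <;> cases t <;> rfl
    simp only [expSum_cons, sectionWord, expSum_append, ih, hx (rootSwap L),
      Bool.false_xor, Bool.true_xor]
    ring

theorem length_sectionWord (L : List Letter) :
    (sectionWord L false).length + (sectionWord L true).length = L.length := by
  induction L with
  | nil => rfl
  | cons x L ih =>
    have hx : ∀ q, (letterSection x q).length + (letterSection x (!q)).length = 1 := by
      intro q
      rcases x with ⟨_ | _, _ | _⟩ <;> cases q <;> rfl
    have := hx (rootSwap L)
    simp only [sectionWord, List.length_append, List.length_cons, Bool.false_xor,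
      Bool.true_xor]
    omega

/-- If one section is empty, the `b`-letters of the word alternate between `b` and `b⁻¹`. -/
theorem expSum_true_of_sectionWord_eq_nil {L : List Letter} {p : Bool}
    (h : sectionWord L p = []) :
    expSum true L = if rootSwap L then cond p (-1) 1 else 0 := by
  induction L with
  | nil => rfl
  | cons x L ih =>
    simp only [sectionWord, List.append_eq_nil_iff] at h
    obtain ⟨hx, hL⟩ := h
    specialize ih hL
    rcases x with ⟨_ | _, _ | _⟩ <;> cases hs : rootSwap L <;> rw [hs] at hx ih <;>
      cases p <;> simp_all [letterSection, rootSwap]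

/-- The sections are strictly shorter than the word unless one of them is empty. -/
theorem expSum_true_eq_zero_of_length_le {n : ℕ}
    (ih : ∀ M : List Letter, M.length < n → eval (FreeGroup.mk M) = 1 → ∀ t, expSum t M = 0)
    {L : List Letter} (hL : L.length ≤ n) (h : eval (FreeGroup.mk L) = 1) :
    expSum true L = 0 := by
  have hswap := rootSwap_eq_false h
  by_cases h₀ : sectionWord L false = []
  · rw [expSum_true_of_sectionWord_eq_nil h₀, hswap]; rfl
  by_cases h₁ : sectionWord L true = []
  · rw [expSum_true_of_sectionWord_eq_nil h₁, hswap]; rfl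
  have hlen := length_sectionWord L
  have hpos₀ := List.length_pos_iff.mpr h₀
  have hpos₁ := List.length_pos_iff.mpr h₁
  rw [expSum_eq_expSum_sectionWord, ih _ (by omega) (eval_sectionWord_eq_one h false),
    ih _ (by omega) (eval_sectionWord_eq_one h true), add_zero]

/-- The `a`-exponent sum of a word is the sum of the `b`-exponent sums of its sections, which are
no longer than the word, so the previous lemma applies to them. -/
theorem expSum_eq_zero {L : List Letter} (h : eval (FreeGroup.mk L) = 1) (t : Bool) :
    expSum t L = 0 := by
  induction hn : L.length using Nat.strong_induction_on generalizing L t with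
  | _ n ih =>
    have ih' : ∀ M : List Letter, M.length < n → eval (FreeGroup.mk M) = 1 →
        ∀ t, expSum t M = 0 := fun M hM hM1 t => ih _ hM hM1 t rfl
    have hb : ∀ M : List Letter, M.length ≤ n → eval (FreeGroup.mk M) = 1 →
        expSum true M = 0 := fun M hM hM1 => expSum_true_eq_zero_of_length_le ih' hM hM1
    have hlen := length_sectionWord L
    cases t
    · rw [expSum_eq_expSum_sectionWord, Bool.not_false,
        hb _ (by omega) (eval_sectionWord_eq_one h false),
        hb _ (by omega) (eval_sectionWord_eq_one h true), add_zero]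
    · exact hb L hn.le h

def expSumHom (t : Bool) : FreeGroup Bool →* Multiplicative ℤ :=
  FreeGroup.lift fun s => if s = t then Multiplicative.ofAdd 1 else 1

theorem expSumHom_mk (t : Bool) (L : List Letter) :
    expSumHom t (FreeGroup.mk L) = Multiplicative.ofAdd (expSum t L) := by
  induction L with
  | nil => rfl
  | cons x L ih =>
    rw [← List.singleton_append, ← FreeGroup.mul_mk, map_mul, ih, expSum_append]
    rcases x with ⟨_ | _, _ | _⟩ <;> cases t <;> rfl

theorem ker_eval_le_ker_expSumHom (t : Bool) : eval.ker ≤ (expSumHom t).ker := by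
  intro w hw
  rw [MonoidHom.mem_ker, ← FreeGroup.mk_toWord (x := w), expSumHom_mk,
    expSum_eq_zero (by rwa [FreeGroup.mk_toWord]) t, ofAdd_zero]

theorem range_eval : eval.range = Basilica := by
  rw [eval, FreeGroup.range_lift_eq_closure, Basilica]
  congr 1
  ext x
  simp

theorem eq_zero_of_zpow_mul_zpow_mem_commutator {n m : ℤ}
    (h : bas_a ^ n * bas_b ^ m ∈ ⁅Basilica, Basilica⁆) : n = 0 ∧ m = 0 := by
  rw [← range_eval, MonoidHom.range_eq_map, ← Subgroup.map_commutator] at h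
  obtain ⟨w, hw, hwu⟩ := h
  set u := FreeGroup.of false ^ n * FreeGroup.of true ^ m
  have hu : w⁻¹ * u ∈ eval.ker := by
    rw [MonoidHom.mem_ker, map_mul, map_inv, hwu, inv_mul_eq_one]
    simp [u, eval]
  have hexp : ∀ t, expSumHom t u = 1 := fun t => by
    have hwt : expSumHom t w = 1 := Abelianization.commutator_subset_ker _ hw
    have := ker_eval_le_ker_expSumHom t hu
    rwa [MonoidHom.mem_ker, map_mul, map_inv, hwt, inv_one, one_mul] at this
  exact ⟨by simpa [u, expSumHom] using hexp false, by simpa [u, expSumHom] using hexp true⟩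

end Basilica

/-- Lemma 4.10: for the Basilica group `G = ⟨a,b⟩`, with
`A = ⟨a⟩^G` and `B = ⟨b⟩^G` the normal closures of the generators, the derived
subgroup satisfies `G' = A ∩ B`. -/
theorem stmt_15 : ⁅Basilica, Basilica⁆ = BasA ⊓ BasB :=
  Subgroup.commutator_closure_pair_eq_inf fun n m h => by
    rw [(Basilica.eq_zero_of_zpow_mul_zpow_mem_commutator h).1, zpow_zero]
    exact one_mem _
end
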